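/- Let m ≥ 1 and consider the polynomial ring S = ℚ[q₁,…,q_{m−1}, u, r₁,…,r_{m−1}, v] in 2m variables. Setting q₀ = r₀ = 1, q_m = u², r_m = v², and q_j = r_j = 0 for j > m, define for each 1 ≤ i ≤ 2m the element P_i = Σ_{j+k=i} q_j · r_k ∈ S. Then the 2m elements P₁,…,P_{2m} are algebraically independent over ℚ. -/

import Mathlib

/-!
Substitute for `q₁, …, q_{m-1}, u` the values `e₁(x²), …, e_{m-1}(x²), x₁⋯x_m`, where
`x₁, …, x_m` are the variables of the first factor and `e_j(x²)` is the `j`-th elementary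
symmetric polynomial in their squares (restriction to the maximal torus), and likewise on the
`r`-side. Then `q_j ↦ e_j(x²)` and `r_k ↦ e_k(y²)` for every `j`, `k`, so `P_i` goes to
`e_i(x₁², …, x_m², y₁², …, y_m²)`. These are the images of the elementary symmetric polynomials in
`2m` variables under the injective map `X_w ↦ X_w²`, hence algebraically independent by the
fundamental theorem of symmetric polynomials, and algebraic independence pulls back along
the substitution.
-/

namespace Multiset

open Finset

variable {R : Type*} [CommSemiring R]

@[simp]
theorem esymm_zero (s : Multiset R) : s.esymm 0 = 1 := by
  simp [esymm]

theorem esymm_eq_zero_of_card_lt {s : Multiset R} {n : ℕ} (h : card s < n) : s.esymm n = 0 := by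
  simp [esymm, powersetCard_eq_empty n h]

theorem esymm_cons_succ (x : R) (s : Multiset R) (n : ℕ) :
    (x ::ₘ s).esymm (n + 1) = s.esymm (n + 1) + x * s.esymm n := by
  simp [esymm, powersetCard_cons, map_map, ← sum_map_mul_left]

theorem esymm_add (s t : Multiset R) (n : ℕ) :
    (s + t).esymm n = ∑ p ∈ HasAntidiagonal.antidiagonal n, s.esymm p.1 * t.esymm p.2 := by
  induction s using Multiset.induction generalizing n with
  | empty =>
    rw [zero_add, Nat.sum_antidiagonal_eq_sum_range_succ_mk, sum_range_succ']
    have hzero (k : ℕ) : (0 : Multiset R).esymm (k + 1) = 0 := esymm_eq_zero_of_card_lt (by simp)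
    simp [hzero]
  | cons x s ih =>
    cases n with
    | zero => simp
    | succ n =>
      rw [cons_add, esymm_cons_succ, ih, ih, Nat.sum_antidiagonal_succ,
        Nat.sum_antidiagonal_succ]
      simp only [esymm_zero, esymm_cons_succ, one_mul, mul_sum, add_mul, sum_add_distrib, mul_assoc,
        add_assoc]

theorem esymm_map_univ_sum_type {α β : Type*} [Fintype α] [Fintype β] (f : α ⊕ β → R) (n : ℕ) :
    (univ.val.map f).esymm n = ∑ p ∈ HasAntidiagonal.antidiagonal n,
      (univ.val.map (f ∘ Sum.inl)).esymm p.1 * (univ.val.map (f ∘ Sum.inr)).esymm p.2 := by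
  rw [← esymm_add, ← univ_disjSum_univ, val_disjSum, disjSum, Multiset.map_add, map_map, map_map]

theorem esymm_card (s : Multiset R) : s.esymm (card s) = s.prod := by
  simp [esymm, powersetCard_self]

end Multiset

namespace MvPolynomial

theorem algebraicIndependent_esymm (σ R : Type*) [Fintype σ] [CommRing R] {n : ℕ}
    (hn : n ≤ Fintype.card σ) :
    AlgebraicIndependent R fun i : Fin n => esymm σ R (i + 1) := by
  have h : ⇑(aeval fun i : Fin n => esymm σ R (i + 1)) = Subtype.val ∘ esymmAlgHom σ R n :=
    _root_.funext fun p => (esymmAlgHom_apply p).symm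
  rw [AlgebraicIndependent, h]
  exact Subtype.val_injective.comp (esymmAlgHom_injective R hn)

end MvPolynomial

section TorusRestriction

open Finset MvPolynomial

variable {R A σ : Type*} [CommSemiring R] [CommSemiring A] [Algebra R A] {m : ℕ}

def torusRestriction (x : Fin m → A) (j : Fin m) : A :=
  if (j : ℕ) = m - 1 then ∏ k, x k else (univ.val.map fun k => x k ^ 2).esymm (j + 1)

theorem aeval_eq_esymm_sq_of_torusRestriction (ι : Fin m → σ) (x : Fin m → A) (g : σ → A)
    (hg : g ∘ ι = torusRestriction x) (q : ℕ → MvPolynomial σ R) (hq0 : q 0 = 1)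
    (hqX : ∀ k : Fin m, (k : ℕ) + 1 < m → q (k + 1) = X (ι k))
    (hqm : ∀ k : Fin m, (k : ℕ) + 1 = m → q m = X (ι k) ^ 2)
    (hq_top : ∀ j : ℕ, m < j → q j = 0) (j : ℕ) :
    aeval g (q j) = (univ.val.map fun k => x k ^ 2).esymm j := by
  have hg' (k : Fin m) : g (ι k) = torusRestriction x k := congrFun hg k
  obtain rfl | hj0 := eq_or_ne j 0
  · simp [hq0]
  rcases lt_trichotomy j m with hjm | rfl | hjm
  · obtain ⟨k, rfl⟩ : ∃ k : Fin m, (k : ℕ) + 1 = j := ⟨⟨j - 1, by omega⟩, by dsimp only; omega⟩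
    rw [hqX k hjm, aeval_X, hg', torusRestriction, if_neg (by omega)]
  · have hprod := Multiset.esymm_card (univ.val.map fun k => x k ^ 2)
    rw [Multiset.card_map, card_val, card_univ, Fintype.card_fin] at hprod
    rw [hqm ⟨j - 1, by omega⟩ (by dsimp only; omega), map_pow, aeval_X, hg', torusRestriction,
      if_pos rfl, hprod, Finset.prod_map_val, prod_pow]
  · rw [hq_top j hjm, map_zero, Multiset.esymm_eq_zero_of_card_lt (by simpa)]

end TorusRestriction

open MvPolynomial

/-- In `S = ℚ[q₁,…,q_{m-1},u,r₁,…,r_{m-1},v]`, with `q₀ = r₀ = 1`, `q_m = u²`,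
`r_m = v²` and `q_j = r_j = 0` for `j > m`, the elements
`P_i = ∑_{j+k=i} q_j r_k` for `1 ≤ i ≤ 2m` are algebraically independent
over `ℚ`. -/
theorem algebraicIndependent_whitney_sum_classes_even (m : ℕ) (hm : 1 ≤ m)
    (q r : ℕ → MvPolynomial (Fin m ⊕ Fin m) ℚ)
    (hq0 : q 0 = 1)
    (hqX : ∀ j : ℕ, ∀ h : 1 ≤ j, ∀ h' : j ≤ m - 1,
      q j = X (Sum.inl ⟨j - 1, by omega⟩))
    (hqm : q m = (X (Sum.inl ⟨m - 1, by omega⟩) : MvPolynomial (Fin m ⊕ Fin m) ℚ) ^ 2)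
    (hq_top : ∀ j : ℕ, m < j → q j = 0)
    (hr0 : r 0 = 1)
    (hrX : ∀ j : ℕ, ∀ h : 1 ≤ j, ∀ h' : j ≤ m - 1,
      r j = X (Sum.inr ⟨j - 1, by omega⟩))
    (hrm : r m = (X (Sum.inr ⟨m - 1, by omega⟩) : MvPolynomial (Fin m ⊕ Fin m) ℚ) ^ 2)
    (hr_top : ∀ j : ℕ, m < j → r j = 0) :
    AlgebraicIndependent ℚ
      (fun i : Fin (2 * m) =>
        ∑ jk ∈ Finset.HasAntidiagonal.antidiagonal ((i : ℕ) + 1), q jk.1 * r jk.2) := by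
  let g : Fin m ⊕ Fin m → MvPolynomial (Fin m ⊕ Fin m) ℚ :=
    Sum.elim (torusRestriction (X ∘ Sum.inl)) (torusRestriction (X ∘ Sum.inr))
  have hq := aeval_eq_esymm_sq_of_torusRestriction Sum.inl _ g rfl q hq0
    (fun k _ => by simpa using hqX (k + 1) (by omega) (by omega))
    (fun k hk => by rw [hqm, show k = ⟨m - 1, by omega⟩ by ext; dsimp only; omega]) hq_top
  have hr := aeval_eq_esymm_sq_of_torusRestriction Sum.inr _ g rfl r hr0
    (fun k _ => by simpa using hrX (k + 1) (by omega) (by omega))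
    (fun k hk => by rw [hrm, show k = ⟨m - 1, by omega⟩ by ext; dsimp only; omega]) hr_top
  refine AlgebraicIndependent.of_comp (aeval g) ?_
  have hsubst : aeval g ∘ (fun i : Fin (2 * m) =>
        ∑ jk ∈ Finset.HasAntidiagonal.antidiagonal ((i : ℕ) + 1), q jk.1 * r jk.2) =
      expand 2 ∘ fun i : Fin (2 * m) => esymm (Fin m ⊕ Fin m) ℚ (i + 1) := by
    funext i
    simp only [Function.comp_apply, map_sum, map_mul, hq, hr]
    exact (Multiset.esymm_map_univ_sum_type (fun w => X w ^ 2) _).symm.trans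
      (aeval_esymm_eq_multiset_esymm _ ℚ _ _).symm
  rw [hsubst]
  exact (algebraicIndependent_esymm _ ℚ (by simp [two_mul])).map' (expand_injective two_pos)
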